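/- arXiv:2111.10352 — 6 statements merged into one kernel-verified Lean document; each statement's English description precedes it below -/
import Mathlib

section
/- Let D be a distribution on a finite domain X and let m, M be positive integers. Let Φ_{M→m}∘D^M denote the distribution of a sample of m points drawn uniformly with replacement from a multiset S of M i.i.d. draws from D. Then the total variation distance between D^m (m i.i.d. draws from D) and Φ_{M→m}∘D^M is at most C(m,2)/M, where C(m,2) = m(m−1)/2. -/
open Finset

def IsPMF {X : Type*} [Fintype X] (D : X → ℝ) : Prop :=
  (∀ x, 0 ≤ D x) ∧ ∑ x, D x = 1

noncomputable def tvDist {X : Type*} [Fintype X] (D D' : X → ℝ) : ℝ :=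
  (∑ x, |D x - D' x|) / 2

section Aux

variable {X : Type*} [Fintype X] [DecidableEq X] {m M : ℕ}

private lemma sum_prod_pmf (D : X → ℝ) (hD1 : ∑ x, D x = 1) (n : ℕ) :
    ∑ s : Fin n → X, ∏ i, D (s i) = 1 := by
  have h := Finset.prod_univ_sum (fun _ : Fin n => (univ : Finset X)) (fun _ x => D x)
  rw [Fintype.piFinset_univ] at h
  rw [← h]
  simp [hD1]

private lemma ind_eq_prod (idx : Fin m → Fin M) (s : Fin m → X) (T : Fin M → X) :
    (if ∀ i, T (idx i) = s i then (1:ℝ) else 0)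
      = ∏ j : Fin M, (if ∀ i, idx i = j → s i = T j then (1:ℝ) else 0) := by
  by_cases h : ∀ i, T (idx i) = s i
  · rw [if_pos h]
    symm
    apply Finset.prod_eq_one
    intro j _
    rw [if_pos]
    intro i hij
    subst hij
    exact (h i).symm
  · rw [if_neg h]
    push_neg at h
    obtain ⟨i, hi⟩ := h
    symm
    apply Finset.prod_eq_zero (Finset.mem_univ (idx i))
    rw [if_neg]
    intro hcon
    exact hi ((hcon i rfl).symm)

private lemma sum_cond_inj (D : X → ℝ) (hD0 : ∀ x, 0 ≤ D x) (hD1 : ∑ x, D x = 1)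
    (idx : Fin m → Fin M) (hidx : Function.Injective idx) (s : Fin m → X) :
    ∑ T : Fin M → X, (∏ j, D (T j)) * (if ∀ i, T (idx i) = s i then (1:ℝ) else 0)
      = ∏ i, D (s i) := by
  have h1 : ∀ T : Fin M → X,
      (∏ j, D (T j)) * (if ∀ i, T (idx i) = s i then (1:ℝ) else 0)
        = ∏ j : Fin M, (D (T j) * if ∀ i, idx i = j → s i = T j then (1:ℝ) else 0) := by
    intro T
    rw [ind_eq_prod idx s T, ← Finset.prod_mul_distrib]
  simp_rw [h1]
  have h2 := Finset.prod_univ_sum (fun _ : Fin M => (univ : Finset X))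
    (fun j x => D x * if ∀ i, idx i = j → s i = x then (1:ℝ) else 0)
  rw [Fintype.piFinset_univ] at h2
  rw [← h2]
  have h3 : ∀ i : Fin m,
      (∑ x : X, D x * if ∀ i', idx i' = idx i → s i' = x then (1:ℝ) else 0) = D (s i) := by
    intro i
    have he : ∀ x : X, (∀ i', idx i' = idx i → s i' = x) ↔ s i = x := by
      intro x
      constructor
      · intro h; exact h i rfl
      · intro h i' hi'; rw [hidx hi']; exact h
    simp_rw [he, mul_ite, mul_one, mul_zero]
    simp [Finset.sum_ite_eq]
  calc (∏ j : Fin M, ∑ x : X, D x * if ∀ i, idx i = j → s i = x then (1:ℝ) else 0)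
      = ∏ j ∈ Finset.image idx univ,
          ∑ x : X, D x * if ∀ i, idx i = j → s i = x then (1:ℝ) else 0 := by
        refine (Finset.prod_subset (Finset.subset_univ _) ?_).symm
        intro j _ hj
        have hvac : ∀ x : X, (∀ i, idx i = j → s i = x) := by
          intro x i hij
          exact absurd (Finset.mem_image.mpr ⟨i, Finset.mem_univ i, hij⟩) hj
        have e : ∀ x ∈ (univ : Finset X),
            D x * (if ∀ i, idx i = j → s i = x then (1:ℝ) else 0) = D x :=
          fun x _ => by rw [if_pos (hvac x), mul_one]
        rw [Finset.sum_congr rfl e]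
        exact hD1
    _ = ∏ i : Fin m, ∑ x : X, D x * if ∀ i', idx i' = idx i → s i' = x then (1:ℝ) else 0 :=
        Finset.prod_image (fun i _ j _ h => hidx h)
    _ = ∏ i, D (s i) := Finset.prod_congr rfl fun i _ => h3 i

private lemma sum_cond_all (D : X → ℝ) (hD1 : ∑ x, D x = 1) (idx : Fin m → Fin M) :
    ∑ s : Fin m → X, ∑ T : Fin M → X,
      (∏ j, D (T j)) * (if ∀ i, T (idx i) = s i then (1:ℝ) else 0) = 1 := by
  rw [Finset.sum_comm]
  have h : ∀ T : Fin M → X,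
      ∑ s : Fin m → X, (if ∀ i, T (idx i) = s i then (1:ℝ) else 0) = 1 := by
    intro T
    have he : ∀ s : Fin m → X, (∀ i, T (idx i) = s i) ↔ (fun i => T (idx i)) = s := by
      intro s; rw [funext_iff]
    simp_rw [he]
    simp [Finset.sum_ite_eq]
  simp_rw [← Finset.mul_sum, h, mul_one]
  exact sum_prod_pmf D hD1 M

private lemma one_sub_sum_le_prod {ι : Type*} (s : Finset ι) (a b : ι → ℝ)
    (ha : ∀ i ∈ s, 0 ≤ a i) (hb0 : ∀ i ∈ s, 0 ≤ b i) (hab : ∀ i ∈ s, 1 - a i ≤ b i) :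
    1 - ∑ i ∈ s, a i ≤ ∏ i ∈ s, b i := by
  induction s using Finset.cons_induction with
  | empty => simp
  | cons i s hi ih =>
    rw [Finset.sum_cons, Finset.prod_cons]
    have ha' := ha i (Finset.mem_cons_self i s)
    have hb' := hb0 i (Finset.mem_cons_self i s)
    have hab' := hab i (Finset.mem_cons_self i s)
    have ihs : 1 - ∑ j ∈ s, a j ≤ ∏ j ∈ s, b j :=
      ih (fun j hj => ha j (Finset.mem_cons_of_mem hj))
        (fun j hj => hb0 j (Finset.mem_cons_of_mem hj))
        (fun j hj => hab j (Finset.mem_cons_of_mem hj))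
    have hsum : 0 ≤ ∑ j ∈ s, a j :=
      Finset.sum_nonneg fun j hj => ha j (Finset.mem_cons_of_mem hj)
    have hprod : 0 ≤ ∏ j ∈ s, b j :=
      Finset.prod_nonneg fun j hj => hb0 j (Finset.mem_cons_of_mem hj)
    nlinarith [mul_le_mul_of_nonneg_left ihs hb']

end Aux

/-- The total variation distance between `m` i.i.d. draws from `D` and the distribution
obtained by drawing `M` i.i.d. points from `D` and then subsampling `m` of them uniformly
with replacement is at most `C(m,2)/M = m(m−1)/2/M`. -/
theorem stmt1 {X : Type*} [Fintype X] [DecidableEq X] (D : X → ℝ) (hD : IsPMF D)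
    (m M : ℕ) (hm : 0 < m) (hM : 0 < M) :
    tvDist (fun s : Fin m → X => ∏ i, D (s i))
      (fun s : Fin m → X => ∑ T : Fin M → X, (∏ j, D (T j)) *
        ∑ idx : Fin m → Fin M, if ∀ i, T (idx i) = s i then ((M : ℝ))⁻¹ ^ m else 0)
      ≤ (m : ℝ) * ((m : ℝ) - 1) / 2 / M := by
  obtain ⟨hD0, hD1⟩ := hD
  have hMR : (0:ℝ) < M := by exact_mod_cast hM
  set c : ℝ := (M:ℝ)⁻¹ ^ m with hc
  have hc0 : 0 ≤ c := by positivity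
  set A : (Fin m → Fin M) → (Fin m → X) → ℝ := fun idx s =>
    ∑ T : Fin M → X, (∏ j, D (T j)) * (if ∀ i, T (idx i) = s i then (1:ℝ) else 0) with hA
  have hA0 : ∀ idx s, 0 ≤ A idx s := by
    intro idx s
    apply Finset.sum_nonneg
    intro T _
    apply mul_nonneg (Finset.prod_nonneg fun j _ => hD0 _)
    split <;> norm_num
  set N : Finset (Fin m → Fin M) := univ.filter (fun idx => Function.Injective idx) with hN
  set N' : Finset (Fin m → Fin M) := univ.filter (fun idx => ¬ Function.Injective idx) with hN'
  set p : ℝ := N.card * c with hp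
  set P : (Fin m → X) → ℝ := fun s => ∏ i, D (s i) with hP
  set R : (Fin m → X) → ℝ := fun s => c * ∑ idx ∈ N', A idx s with hR
  have hQ : ∀ s : Fin m → X, (∑ T : Fin M → X, (∏ j, D (T j)) *
        ∑ idx : Fin m → Fin M, if ∀ i, T (idx i) = s i then ((M : ℝ))⁻¹ ^ m else 0)
      = p * P s + R s := by
    intro s
    have step1 : (∑ T : Fin M → X, (∏ j, D (T j)) *
        ∑ idx : Fin m → Fin M, if ∀ i, T (idx i) = s i then ((M : ℝ))⁻¹ ^ m else 0)
        = ∑ idx : Fin m → Fin M, c * A idx s := by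
      simp_rw [Finset.mul_sum]
      rw [Finset.sum_comm]
      refine Finset.sum_congr rfl fun idx _ => ?_
      rw [hA, Finset.mul_sum]
      refine Finset.sum_congr rfl fun T _ => ?_
      split <;> ring
    rw [step1, ← Finset.sum_filter_add_sum_filter_not univ (fun idx => Function.Injective idx)]
    have step2 : ∑ idx ∈ N, c * A idx s = p * P s := by
      have hcg : ∀ idx ∈ N, c * A idx s = c * P s := by
        intro idx hidx
        rw [hA]
        simp only
        rw [sum_cond_inj D hD0 hD1 idx (Finset.mem_filter.mp hidx).2 s]
      rw [Finset.sum_congr rfl hcg, Finset.sum_const, nsmul_eq_mul, hp]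
      ring
    rw [← hN, ← hN', step2]
    show _ = p * P s + c * ∑ idx ∈ N', A idx s
    rw [Finset.mul_sum]
  have hPsum : ∑ s : Fin m → X, P s = 1 := sum_prod_pmf D hD1 m
  have hP0 : ∀ s, 0 ≤ P s := fun s => Finset.prod_nonneg fun i _ => hD0 _
  have hcards : N.card + N'.card = M ^ m := by
    rw [hN, hN', Finset.card_filter_add_card_filter_not, Finset.card_univ]
    simp
  have hcM : c * (M:ℝ) ^ m = 1 := by
    rw [hc, ← mul_pow, inv_mul_cancel₀ hMR.ne']
    simp
  have hRsum : ∑ s : Fin m → X, R s = 1 - p := by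
    rw [hR]
    simp only
    rw [← Finset.mul_sum, Finset.sum_comm]
    have hall : ∀ idx ∈ N', ∑ s : Fin m → X, A idx s = 1 := by
      intro idx _
      exact sum_cond_all D hD1 idx
    rw [Finset.sum_congr rfl hall, Finset.sum_const, nsmul_eq_mul, mul_one]
    have hcast : (N.card : ℝ) + N'.card = (M:ℝ)^m := by exact_mod_cast hcards
    have hN'c : (N'.card : ℝ) = (M:ℝ)^m - N.card := by linarith
    rw [hN'c, hp]
    nlinarith [hcM]
  have hR0 : ∀ s, 0 ≤ R s := by
    intro s
    exact mul_nonneg hc0 (Finset.sum_nonneg fun idx _ => hA0 idx s)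
  have hp1 : p ≤ 1 := by
    have := Finset.sum_nonneg (fun s (_ : s ∈ (univ : Finset (Fin m → X))) => hR0 s)
    rw [hRsum] at this
    linarith
  have htv : tvDist (fun s : Fin m → X => ∏ i, D (s i))
      (fun s : Fin m → X => ∑ T : Fin M → X, (∏ j, D (T j)) *
        ∑ idx : Fin m → Fin M, if ∀ i, T (idx i) = s i then ((M : ℝ))⁻¹ ^ m else 0)
      ≤ 1 - p := by
    rw [tvDist]
    rw [div_le_iff₀ (by norm_num : (0:ℝ) < 2)]
    calc ∑ s : Fin m → X, |P s - (∑ T : Fin M → X, (∏ j, D (T j)) *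
            ∑ idx : Fin m → Fin M, if ∀ i, T (idx i) = s i then ((M : ℝ))⁻¹ ^ m else 0)|
        = ∑ s : Fin m → X, |(1 - p) * P s - R s| := by
          refine Finset.sum_congr rfl fun s _ => ?_
          rw [hQ s]; ring_nf
      _ ≤ ∑ s : Fin m → X, ((1 - p) * P s + R s) := by
          refine Finset.sum_le_sum fun s _ => ?_
          have h1 : 0 ≤ (1 - p) * P s := mul_nonneg (by linarith) (hP0 s)
          have h2 := hR0 s
          exact abs_le.mpr ⟨by linarith, by linarith⟩
      _ = (1 - p) * 2 := by
          rw [Finset.sum_add_distrib, ← Finset.mul_sum, hPsum, hRsum]; ring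
  refine le_trans htv ?_
  have hcard : N.card = M.descFactorial m := by
    rw [hN, ← Fintype.card_subtype,
      Fintype.card_congr (Equiv.subtypeInjectiveEquivEmbedding (Fin m) (Fin M))]
    simp [Fintype.card_embedding_eq]
  have hpval : p = ∏ k ∈ Finset.range m, (((M - k : ℕ) : ℝ) * (M:ℝ)⁻¹) := by
    rw [hp, hcard, Nat.descFactorial_eq_prod_range, hc, Nat.cast_prod,
      Finset.prod_mul_distrib, Finset.prod_const, Finset.card_range]
  have hbound : 1 - ∑ k ∈ Finset.range m, (k:ℝ)/M ≤ p := by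
    rw [hpval]
    refine one_sub_sum_le_prod _ _ _ (fun k _ => by positivity) (fun k _ => by positivity) ?_
    intro k _
    have h1 : (M:ℝ) - k ≤ ((M - k : ℕ) : ℝ) := by
      rcases le_or_gt k M with h | h
      · rw [Nat.cast_sub h]
      · have hz : M - k = 0 := Nat.sub_eq_zero_of_le h.le
        rw [hz]
        have : (M:ℝ) < k := by exact_mod_cast h
        simp
        linarith
    have : 1 - (k:ℝ)/M = ((M:ℝ) - k) * (M:ℝ)⁻¹ := by field_simp
    rw [this]
    exact mul_le_mul_of_nonneg_right h1 (by positivity)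
  have hgauss : (∑ k ∈ Finset.range m, (k:ℝ)) * 2 = (m:ℝ) * ((m:ℝ) - 1) := by
    have h := Finset.sum_range_id_mul_two m
    have h2 : ((∑ i ∈ Finset.range m, i : ℕ) : ℝ) * 2 = ((m * (m - 1) : ℕ) : ℝ) := by
      exact_mod_cast congrArg (Nat.cast (R := ℝ)) h
    rw [Nat.cast_mul, Nat.cast_sub hm] at h2
    push_cast at h2 ⊢
    linarith
  have hsumdiv : ∑ k ∈ Finset.range m, (k:ℝ)/M = (∑ k ∈ Finset.range m, (k:ℝ)) / M := by
    rw [Finset.sum_div]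
  have : ∑ k ∈ Finset.range m, (k:ℝ)/M = (m:ℝ) * ((m:ℝ) - 1) / 2 / M := by
    rw [hsumdiv]
    rw [eq_div_iff hMR.ne'] at *
    field_simp
    linarith
  linarith
end

section
/- Let ρ be a cost function on distributions over a finite domain X that is closed under mixtures, let D be a distribution on X, η ≥ 0, and n ∈ ℕ. Suppose to each multiset S ∈ X^n is associated a multiset Ŝ with ρ(U(S), U(Ŝ)) ≤ η, where U(·) denotes the uniform (empirical) distribution of a multiset. Define D̂ as the distribution of a point x generated by drawing S ~ D^n and then x ~ U(Ŝ). Then ρ(D, D̂) ≤ η. -/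
open Finset

/-- The empirical (uniform) distribution of the multiset given by a tuple `S ∈ Xⁿ`. -/
noncomputable def emp {X : Type*} [Fintype X] [DecidableEq X] {n : ℕ} (S : Fin n → X) :
    X → ℝ :=
  fun x => ((univ.filter fun i => S i = x).card : ℝ) / n

/-- Finite mixtures: `ρ` of a mixture is bounded by the sup of the components. -/
lemma mix_bound {X ι : Type*} [Fintype X] [DecidableEq ι]
    (ρ : (X → ℝ) → (X → ℝ) → ENNReal)
    (hmix : ∀ θ : ℝ, θ ∈ Set.Ioo (0:ℝ) 1 → ∀ D₁ D₂ Dh₁ Dh₂ : X → ℝ,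
      IsPMF D₁ → IsPMF D₂ → IsPMF Dh₁ → IsPMF Dh₂ →
      ρ (fun x => θ * D₁ x + (1 - θ) * D₂ x) (fun x => θ * Dh₁ x + (1 - θ) * Dh₂ x)
        ≤ max (ρ D₁ Dh₁) (ρ D₂ Dh₂))
    (η : ENNReal) :
    ∀ s : Finset ι, ∀ w : ι → ℝ, ∀ P Q : ι → X → ℝ,
      (∀ i ∈ s, 0 ≤ w i) → (∑ i ∈ s, w i) = 1 →
      (∀ i ∈ s, IsPMF (P i)) → (∀ i ∈ s, IsPMF (Q i)) →
      (∀ i ∈ s, ρ (P i) (Q i) ≤ η) →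
      ρ (fun x => ∑ i ∈ s, w i * P i x) (fun x => ∑ i ∈ s, w i * Q i x) ≤ η := by
  intro s
  induction s using Finset.induction_on with
  | empty => intro w P Q hw hsum hP hQ hρ; simp at hsum
  | @insert a s ha ih =>
    intro w P Q hw hsum hP hQ hρ
    rw [Finset.sum_insert ha] at hsum
    set t := ∑ i ∈ s, w i with ht
    have hwnn : ∀ i ∈ s, 0 ≤ w i := fun i hi => hw i (Finset.mem_insert_of_mem hi)
    have hwa : 0 ≤ w a := hw a (Finset.mem_insert_self a s)
    by_cases h0 : t = 0
    · -- all mass on a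
      have hall : ∀ i ∈ s, w i = 0 :=
        (Finset.sum_eq_zero_iff_of_nonneg hwnn).mp h0
      have hwa1 : w a = 1 := by rw [h0] at hsum; linarith
      have e1 : (fun x => ∑ i ∈ insert a s, w i * P i x) = P a := by
        funext x
        rw [Finset.sum_insert ha, hwa1, Finset.sum_eq_zero (fun i hi => by rw [hall i hi]; ring)]
        ring
      have e2 : (fun x => ∑ i ∈ insert a s, w i * Q i x) = Q a := by
        funext x
        rw [Finset.sum_insert ha, hwa1, Finset.sum_eq_zero (fun i hi => by rw [hall i hi]; ring)]
        ring
      rw [e1, e2]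
      exact hρ a (Finset.mem_insert_self a s)
    · have htpos : 0 < t := lt_of_le_of_ne (Finset.sum_nonneg hwnn) (Ne.symm h0)
      by_cases ha0 : w a = 0
      · have e1 : (fun x => ∑ i ∈ insert a s, w i * P i x)
            = fun x => ∑ i ∈ s, w i * P i x := by
          funext x; rw [Finset.sum_insert ha, ha0]; ring
        have e2 : (fun x => ∑ i ∈ insert a s, w i * Q i x)
            = fun x => ∑ i ∈ s, w i * Q i x := by
          funext x; rw [Finset.sum_insert ha, ha0]; ring
        rw [e1, e2]
        exact ih w P Q hwnn (by rw [ha0] at hsum; linarith)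
          (fun i hi => hP i (Finset.mem_insert_of_mem hi))
          (fun i hi => hQ i (Finset.mem_insert_of_mem hi))
          (fun i hi => hρ i (Finset.mem_insert_of_mem hi))
      · have hθ : w a ∈ Set.Ioo (0:ℝ) 1 :=
          ⟨lt_of_le_of_ne hwa (Ne.symm ha0), by linarith⟩
        set P₂ : X → ℝ := fun x => ∑ i ∈ s, (w i / t) * P i x with hP₂
        set Q₂ : X → ℝ := fun x => ∑ i ∈ s, (w i / t) * Q i x with hQ₂
        have hsum' : ∑ i ∈ s, w i / t = 1 := by
          rw [← Finset.sum_div, ← ht, div_self h0]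
        have hwnn' : ∀ i ∈ s, 0 ≤ w i / t := fun i hi =>
          div_nonneg (hwnn i hi) htpos.le
        have hPMF : ∀ (R : ι → X → ℝ), (∀ i ∈ s, IsPMF (R i)) →
            IsPMF (fun x => ∑ i ∈ s, (w i / t) * R i x) := by
          intro R hR
          constructor
          · intro x
            exact Finset.sum_nonneg fun i hi =>
              mul_nonneg (hwnn' i hi) ((hR i hi).1 x)
          · rw [Finset.sum_comm]
            calc ∑ i ∈ s, ∑ x, w i / t * R i x
                = ∑ i ∈ s, w i / t := by
                  refine Finset.sum_congr rfl fun i hi => ?_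
                  rw [← Finset.mul_sum, (hR i hi).2, mul_one]
              _ = 1 := hsum'
        have hPs := fun i hi => hP i (Finset.mem_insert_of_mem hi)
        have hQs := fun i hi => hQ i (Finset.mem_insert_of_mem hi)
        have hP₂pmf : IsPMF P₂ := hPMF P hPs
        have hQ₂pmf : IsPMF Q₂ := hPMF Q hQs
        have key := hmix (w a) hθ (P a) P₂ (Q a) Q₂
          (hP a (Finset.mem_insert_self a s)) hP₂pmf
          (hQ a (Finset.mem_insert_self a s)) hQ₂pmf
        have htw : (1 : ℝ) - w a = t := by linarith
        have e : ∀ (R : ι → X → ℝ),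
            (fun x => ∑ i ∈ insert a s, w i * R i x)
              = fun x => w a * R a x + (1 - w a) * ∑ i ∈ s, (w i / t) * R i x := by
          intro R
          funext x
          rw [Finset.sum_insert ha, htw, Finset.mul_sum]
          congr 1
          refine Finset.sum_congr rfl fun i hi => ?_
          field_simp
        rw [e P, e Q]
        refine le_trans key (max_le (hρ a (Finset.mem_insert_self a s)) ?_)
        exact ih (fun i => w i / t) P Q hwnn' hsum' hPs hQs
          (fun i hi => hρ i (Finset.mem_insert_of_mem hi))

set_option maxHeartbeats 800000 in
/-- If `ρ` is closed under mixtures and to every sample `S ∈ Xⁿ` is associated a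
corrupted empirical distribution `Hat S` with `ρ(U(S), Hat S) ≤ η`, then the distribution
`D̂` of a point obtained by drawing `S ~ Dⁿ` and then a point from `Hat S` satisfies
`ρ(D, D̂) ≤ η`. -/
theorem stmt5 {X : Type*} [Fintype X] [DecidableEq X]
    (ρ : (X → ℝ) → (X → ℝ) → ENNReal)
    (hmix : ∀ θ : ℝ, θ ∈ Set.Ioo (0:ℝ) 1 → ∀ D₁ D₂ Dh₁ Dh₂ : X → ℝ,
      IsPMF D₁ → IsPMF D₂ → IsPMF Dh₁ → IsPMF Dh₂ →
      ρ (fun x => θ * D₁ x + (1 - θ) * D₂ x) (fun x => θ * Dh₁ x + (1 - θ) * Dh₂ x)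
        ≤ max (ρ D₁ Dh₁) (ρ D₂ Dh₂))
    (D : X → ℝ) (hD : IsPMF D) (η : ENNReal) (n : ℕ) (hn : 0 < n)
    (Hat : (Fin n → X) → X → ℝ)
    (hHat : ∀ S : Fin n → X, IsPMF (Hat S) ∧ ρ (emp S) (Hat S) ≤ η) :
    ρ D (fun x => ∑ S : Fin n → X, (∏ i, D (S i)) * Hat S x) ≤ η := by
  obtain ⟨hDnn, hDsum⟩ := hD
  have hn' : (n:ℝ) ≠ 0 := Nat.cast_ne_zero.mpr hn.ne'
  have hwnn : ∀ S : Fin n → X, 0 ≤ ∏ i, D (S i) :=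
    fun S => Finset.prod_nonneg fun i _ => hDnn (S i)
  have hwsum : ∑ S : Fin n → X, ∏ i, D (S i) = 1 := by
    have h := Finset.prod_univ_sum (fun _ : Fin n => (univ : Finset X))
      (fun _ x => D x)
    rw [Fintype.piFinset_univ] at h
    simpa [hDsum] using h.symm
  have hempeq : ∀ (S : Fin n → X) (x : X),
      emp S x = (∑ i : Fin n, if S i = x then (1:ℝ) else 0) / n := by
    intro S x
    unfold emp
    congr 1
    rw [Finset.card_filter]
    push_cast
    rfl
  have hemp : ∀ S : Fin n → X, IsPMF (emp S) := by
    intro S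
    refine ⟨fun x => div_nonneg (Nat.cast_nonneg _) (Nat.cast_nonneg _), ?_⟩
    unfold emp
    rw [← Finset.sum_div, div_eq_one_iff_eq hn']
    norm_cast
    rw [← Finset.card_eq_sum_card_fiberwise (fun i _ => Finset.mem_univ (S i)),
      Finset.card_univ, Fintype.card_fin]
  have hDmix : D = fun x => ∑ S : Fin n → X, (∏ i, D (S i)) * emp S x := by
    funext x
    symm
    have inner : ∀ i : Fin n,
        ∑ S : Fin n → X, (∏ j, D (S j)) * (if S i = x then (1:ℝ) else 0) = D x := by
      intro i
      set g : Fin n → X → ℝ :=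
        fun j y => if j = i then D y * (if y = x then 1 else 0) else D y with hg
      have h1 : ∀ S : Fin n → X,
          (∏ j, D (S j)) * (if S i = x then (1:ℝ) else 0) = ∏ j, g j (S j) := by
        intro S
        rw [← Finset.mul_prod_erase univ (fun j => g j (S j)) (Finset.mem_univ i),
            ← Finset.mul_prod_erase univ (fun j => D (S j)) (Finset.mem_univ i)]
        have he : ∏ j ∈ univ.erase i, g j (S j) = ∏ j ∈ univ.erase i, D (S j) :=
          Finset.prod_congr rfl fun j hj => by
            simp [hg, (Finset.mem_erase.mp hj).1]
        rw [he]
        simp [hg]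
      have h2 : ∀ j : Fin n, ∑ y, g j y = if j = i then D x else 1 := by
        intro j
        by_cases hj : j = i <;>
          simp [hg, hj, mul_ite, mul_one, mul_zero, hDsum]
      calc ∑ S : Fin n → X, (∏ j, D (S j)) * (if S i = x then (1:ℝ) else 0)
          = ∑ S : Fin n → X, ∏ j, g j (S j) :=
            Finset.sum_congr rfl fun S _ => h1 S
        _ = ∏ j, ∑ y, g j y := by
            rw [Finset.prod_univ_sum (fun _ : Fin n => (univ : Finset X)) (fun j y => g j y),
              Fintype.piFinset_univ]
        _ = ∏ j : Fin n, (if j = i then D x else 1) :=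
            Finset.prod_congr rfl fun j _ => h2 j
        _ = D x := by simp
    calc ∑ S : Fin n → X, (∏ i, D (S i)) * emp S x
        = ∑ S : Fin n → X, (∑ i : Fin n, (∏ j, D (S j)) * (if S i = x then (1:ℝ) else 0)) / n := by
          refine Finset.sum_congr rfl fun S _ => ?_
          rw [hempeq S x, ← mul_div_assoc, Finset.mul_sum]
      _ = (∑ i : Fin n, ∑ S : Fin n → X, (∏ j, D (S j)) * (if S i = x then (1:ℝ) else 0)) / n := by
          rw [← Finset.sum_div, Finset.sum_comm]
      _ = (∑ _i : Fin n, D x) / n := by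
          rw [Finset.sum_congr rfl fun i _ => inner i]
      _ = D x := by
          rw [Finset.sum_const, Finset.card_univ, Fintype.card_fin, nsmul_eq_mul]
          field_simp
  have hfin := mix_bound ρ hmix η Finset.univ (fun S => ∏ i, D (S i)) emp Hat
    (fun S _ => hwnn S) hwsum (fun S _ => hemp S)
    (fun S _ => (hHat S).1) (fun S _ => (hHat S).2)
  rwa [← hDmix] at hfin
end

section
/- Define the additive-noise cost by cost_add(D, D̂) = inf{η ≥ 0 : D̂ = (1−η)D + ηE for some distribution E}. Then cost_add is closed under mixtures: for any distributions D_1, D_2, D̂_1, D̂_2 and θ ∈ (0,1), cost_add(θD_1 + (1−θ)D_2, θD̂_1 + (1−θ)D̂_2) ≤ max(cost_add(D_1, D̂_1), cost_add(D_2, D̂_2)). -/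
/-!
Noise can always be raised: if `D̂ = (1 - e) D + e E` and `e ≤ e' ≤ 1`, then
`D̂ = (1 - e') D + e' E'` with `E' = ((e' - e) D + e E) / e'`. So both pairs can be
decomposed at the common level `max e₁ e₂`, and at a common level the decomposition is linear,
hence passes to `θ`-mixtures.
-/

open Finset

/-- The additive-noise cost: the least `η ∈ [0,1]` such that `D̂ = (1−η)D + ηE` for some
distribution `E` (and `∞` if no such `η` exists). -/
noncomputable def costAdd {X : Type*} [Fintype X] (D Dh : X → ℝ) : ENNReal :=
  sInf {η : ENNReal | ∃ e : ℝ, η = ENNReal.ofReal e ∧ 0 ≤ e ∧ e ≤ 1 ∧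
    ∃ E : X → ℝ, IsPMF E ∧ ∀ x, Dh x = (1 - e) * D x + e * E x}

def IsAdditiveNoise {X : Type*} [Fintype X] (D Dh : X → ℝ) (e : ℝ) : Prop :=
  0 ≤ e ∧ e ≤ 1 ∧ ∃ E : X → ℝ, IsPMF E ∧ ∀ x, Dh x = (1 - e) * D x + e * E x

section

variable {X : Type*} [Fintype X]

theorem IsPMF.convexCombination {P Q : X → ℝ} (hP : IsPMF P) (hQ : IsPMF Q) {a b : ℝ}
    (ha : 0 ≤ a) (hb : 0 ≤ b) (hab : a + b = 1) : IsPMF fun x => a * P x + b * Q x := by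
  refine ⟨fun x => add_nonneg (mul_nonneg ha (hP.1 x)) (mul_nonneg hb (hQ.1 x)), ?_⟩
  rw [sum_add_distrib, ← mul_sum, ← mul_sum, hP.2, hQ.2, mul_one, mul_one, hab]

theorem costAdd_le_ofReal {D Dh : X → ℝ} {e : ℝ} (h : IsAdditiveNoise D Dh e) :
    costAdd D Dh ≤ ENNReal.ofReal e :=
  sInf_le ⟨e, rfl, h⟩

theorem IsAdditiveNoise.mono {D Dh : X → ℝ} (hD : IsPMF D) {e e' : ℝ}
    (h : IsAdditiveNoise D Dh e) (hee' : e ≤ e') (he' : e' ≤ 1) : IsAdditiveNoise D Dh e' := by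
  obtain ⟨he, -, E, hE, hDh⟩ := h
  rcases (he.trans hee').eq_or_lt with rfl | he'_pos
  · obtain rfl : e = 0 := le_antisymm hee' he
    exact ⟨le_rfl, zero_le_one, E, hE, hDh⟩
  refine ⟨he'_pos.le, he', _, hD.convexCombination hE (a := (e' - e) / e') (b := e / e')
    (div_nonneg (sub_nonneg.2 hee') he'_pos.le) (div_nonneg he he'_pos.le)
    (by field_simp; ring), fun x => ?_⟩
  rw [hDh x]
  field_simp
  ring

theorem IsAdditiveNoise.mix {D₁ D₂ Dh₁ Dh₂ : X → ℝ} {e θ : ℝ}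
    (h₁ : IsAdditiveNoise D₁ Dh₁ e) (h₂ : IsAdditiveNoise D₂ Dh₂ e) (hθ₀ : 0 ≤ θ) (hθ₁ : θ ≤ 1) :
    IsAdditiveNoise (fun x => θ * D₁ x + (1 - θ) * D₂ x)
      (fun x => θ * Dh₁ x + (1 - θ) * Dh₂ x) e := by
  obtain ⟨he₀, he₁, E₁, hE₁, hDh₁⟩ := h₁
  obtain ⟨-, -, E₂, hE₂, hDh₂⟩ := h₂
  refine ⟨he₀, he₁, _, hE₁.convexCombination hE₂ hθ₀ (sub_nonneg.2 hθ₁) (by ring),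
    fun x => ?_⟩
  dsimp only
  rw [hDh₁ x, hDh₂ x]
  ring

end

theorem stmt7_general {X : Type*} [Fintype X]
    (D₁ D₂ Dh₁ Dh₂ : X → ℝ)
    (hD₁ : IsPMF D₁) (hD₂ : IsPMF D₂)
    (θ : ℝ) (hθ : θ ∈ Set.Ioo (0:ℝ) 1) :
    costAdd (fun x => θ * D₁ x + (1 - θ) * D₂ x) (fun x => θ * Dh₁ x + (1 - θ) * Dh₂ x)
      ≤ max (costAdd D₁ Dh₁) (costAdd D₂ Dh₂) := by
  rw [costAdd.eq_1 D₁ Dh₁, sInf_sup_eq]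
  refine le_iInf₂ fun _ ⟨e₁, h_eq₁, h₁⟩ => ?_
  rw [costAdd.eq_1 D₂ Dh₂, sup_sInf_eq]
  refine le_iInf₂ fun _ ⟨e₂, h_eq₂, h₂⟩ => ?_
  rw [h_eq₁, h_eq₂, ← ENNReal.ofReal_max]
  have hmax : max e₁ e₂ ≤ 1 := max_le h₁.2.1 h₂.2.1
  exact costAdd_le_ofReal <|
    ((IsAdditiveNoise.mono hD₁ h₁ (le_max_left _ _) hmax).mix
      (IsAdditiveNoise.mono hD₂ h₂ (le_max_right _ _) hmax) hθ.1.le hθ.2.le)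

/-- The additive-noise cost function is closed under mixtures. -/
theorem stmt7 {X : Type*} [Fintype X]
    (D₁ D₂ Dh₁ Dh₂ : X → ℝ)
    (hD₁ : IsPMF D₁) (hD₂ : IsPMF D₂) (hDh₁ : IsPMF Dh₁) (hDh₂ : IsPMF Dh₂)
    (θ : ℝ) (hθ : θ ∈ Set.Ioo (0:ℝ) 1) :
    costAdd (fun x => θ * D₁ x + (1 - θ) * D₂ x) (fun x => θ * Dh₁ x + (1 - θ) * Dh₂ x)
      ≤ max (costAdd D₁ Dh₁) (costAdd D₂ Dh₂) :=
  stmt7_general D₁ D₂ Dh₁ Dh₂ hD₁ hD₂ θ hθ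
end

section
/- Let φ^(1),…,φ^(k) : X → [−1,1] be statistical queries, v_1,…,v_k ∈ ℝ, τ > 0, and let 𝒞 be a convex set of distributions on the finite set X. Suppose no distribution D̂ ∈ 𝒞 satisfies |φ^(i)(D̂) − v_i| ≤ τ for all i ∈ [k]. Then there exist weights w ∈ ℝ^k with ||w||_1 = 1 and a threshold T ∈ ℝ such that, letting Ψ(x) = Σ_i w_i φ^(i)(x) (a function X → [−1,1]): (a) Ψ(D̂) ≤ T for all D̂ ∈ 𝒞, and (b) every distribution E with |φ^(i)(E) − v_i| ≤ τ/2 for all i satisfies Ψ(E) ≥ T + τ/2. -/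
/-!
The answer map `D ↦ (φⁱ(D))ᵢ` is linear, so it sends `C` to a convex set `A ⊆ ℝᵏ` missing the
box of radius `τ` around `v`; as `Fin k → ℝ` carries the sup norm, the open box is `ball v τ`.
Hahn–Banach separates `A` from the open ball by a functional `c ⬝ᵥ ·`, and since the dual of the
sup norm is the `ℓ¹` norm, `c` varies by exactly `τ ‖c‖₁` across the ball. Normalising
`w = -c / ‖c‖₁` gives `w ⬝ᵥ a ≤ w ⬝ᵥ v - τ =: T` on `A`, while an answer vector within `τ / 2`
of `v` has `w ⬝ᵥ b ≥ w ⬝ᵥ v - τ / 2 = T + τ / 2`.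
-/

open Finset

open Matrix Metric

section DotProductNorm

variable {ι : Type*} [Fintype ι]

theorem dotProduct_le_sum_abs_mul_norm (w y : ι → ℝ) : w ⬝ᵥ y ≤ (∑ i, |w i|) * ‖y‖ := by
  rw [dotProduct, Finset.sum_mul]
  refine Finset.sum_le_sum fun i _ => ?_
  calc w i * y i ≤ |w i| * |y i| := (le_abs_self _).trans (abs_mul _ _).le
    _ ≤ |w i| * ‖y‖ := by gcongr; exact norm_le_pi_norm y i

theorem exists_norm_le_one_dotProduct_eq_sum_abs (w : ι → ℝ) :
    ∃ y : ι → ℝ, ‖y‖ ≤ 1 ∧ w ⬝ᵥ y = ∑ i, |w i| := by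
  refine ⟨fun i => SignType.sign (w i), (pi_norm_le_iff_of_nonneg zero_le_one).2 fun i => ?_, ?_⟩
  · rcases lt_trichotomy (w i) 0 with h | h | h <;> simp [h]
  · simp [dotProduct, self_mul_sign]

theorem exists_sum_abs_eq_one [Nonempty ι] : ∃ w : ι → ℝ, ∑ i, |w i| = 1 := by
  classical
  exact ⟨Pi.single (Classical.arbitrary ι) 1, by simp [Pi.single_apply, apply_ite]⟩

theorem exists_sum_abs_eq_one_forall_dotProduct_le_of_disjoint_ball [Nonempty ι]
    {A : Set (ι → ℝ)} (hA : Convex ℝ A) {v : ι → ℝ} {τ : ℝ} (hτ : 0 < τ)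
    (hdisj : Disjoint (ball v τ) A) :
    ∃ w : ι → ℝ, ∑ i, |w i| = 1 ∧ ∀ a ∈ A, w ⬝ᵥ a ≤ w ⬝ᵥ v - τ := by
  classical
  rcases A.eq_empty_or_nonempty with rfl | ⟨a₀, ha₀⟩
  · obtain ⟨w, hw⟩ := exists_sum_abs_eq_one (ι := ι)
    exact ⟨w, hw, by simp⟩
  obtain ⟨f, u, hf_ball, hf_A⟩ :=
    geometric_hahn_banach_open (convex_ball v τ) isOpen_ball hA hdisj
  have hf_closedBall : ∀ b ∈ closedBall v τ, f b ≤ u := by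
    rw [← closure_ball v hτ.ne']
    exact closure_minimal (fun b hb => (hf_ball b hb).le)
      (isClosed_le f.continuous continuous_const)
  set c := (dotProductEquiv ℝ ι).symm f.toLinearMap
  have hfc : ∀ x, f x = c ⬝ᵥ x := fun x => by
    rw [← dotProductEquiv_apply_apply, LinearEquiv.apply_symm_apply]; rfl
  set S := ∑ i, |c i|
  have hS : 0 < S := by
    have h := (hf_ball v (mem_ball_self hτ)).trans_le (hf_A a₀ ha₀)
    rw [hfc, hfc, ← sub_pos, ← dotProduct_sub] at h
    exact pos_of_mul_pos_left (h.trans_le (dotProduct_le_sum_abs_mul_norm c _)) (norm_nonneg _)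
  obtain ⟨y, hy, hcy⟩ := exists_norm_le_one_dotProduct_eq_sum_abs c
  have hvu : c ⬝ᵥ v + τ * S ≤ u := by
    have h := hf_closedBall (v + τ • y) <| by
      rw [mem_closedBall, dist_eq_norm, add_sub_cancel_left, norm_smul, Real.norm_of_nonneg hτ.le]
      exact mul_le_of_le_one_right hτ.le hy
    rwa [hfc, dotProduct_add, dotProduct_smul, hcy, smul_eq_mul] at h
  refine ⟨-S⁻¹ • c, ?_, fun a ha => ?_⟩
  · simp [abs_mul, ← Finset.mul_sum, hS.ne', abs_of_pos hS, S]
  · have h := hf_A a ha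
    rw [hfc] at h
    have h' := mul_le_mul_of_nonneg_left (hvu.trans h) (inv_nonneg.2 hS.le)
    rw [mul_add, mul_left_comm, inv_mul_cancel₀ hS.ne', mul_one] at h'
    simp only [neg_smul, neg_dotProduct, smul_dotProduct, smul_eq_mul]
    linarith

end DotProductNorm

theorem stmt11_general {X : Type*} [Fintype X] (k : ℕ) (hk : 0 < k)
    (φ : Fin k → X → ℝ)
    (v : Fin k → ℝ) (τ : ℝ) (hτ : 0 < τ)
    (C : Set (X → ℝ)) (hCconv : Convex ℝ C)
    (hsep : ¬ ∃ Dh ∈ C, ∀ i, |(∑ x, Dh x * φ i x) - v i| ≤ τ) :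
    ∃ (w : Fin k → ℝ) (T : ℝ), (∑ i, |w i|) = 1 ∧
      (∀ Dh ∈ C, ∑ x, Dh x * (∑ i, w i * φ i x) ≤ T) ∧
      (∀ E : X → ℝ, IsPMF E → (∀ i, |(∑ x, E x * φ i x) - v i| ≤ τ / 2) →
        T + τ / 2 ≤ ∑ x, E x * (∑ i, w i * φ i x)) := by
  have : Nonempty (Fin k) := Fin.pos_iff_nonempty.1 hk
  set M := Matrix.of φ
  have hans : ∀ D i, ∑ x, D x * φ i x = (M *ᵥ D) i := fun D i => by
    simp [M, mulVec, dotProduct, mul_comm]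
  have hΨ : ∀ w D, ∑ x, D x * ∑ i, w i * φ i x = w ⬝ᵥ (M *ᵥ D) := fun w D => by
    rw [dotProduct_mulVec, dotProduct_comm]; rfl
  have hdisj : Disjoint (ball v τ) (M.mulVecLin '' C) := by
    rw [Set.disjoint_right]
    rintro _ ⟨D, hD, rfl⟩ hball
    rw [mem_ball, dist_pi_lt_iff hτ] at hball
    exact hsep ⟨D, hD, fun i => by rw [hans, ← Real.dist_eq]; exact (hball i).le⟩
  obtain ⟨w, hw, hwC⟩ :=
    exists_sum_abs_eq_one_forall_dotProduct_le_of_disjoint_ball (hCconv.linear_image _) hτ hdisj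
  refine ⟨w, w ⬝ᵥ v - τ, hw, fun D hD => ?_, fun E _ hE => ?_⟩
  · rw [hΨ]; exact hwC _ ⟨D, hD, rfl⟩
  · have hEv : ‖v - M *ᵥ E‖ ≤ τ / 2 := (pi_norm_le_iff_of_nonneg (by positivity)).2 fun i => by
      rw [Pi.sub_apply, Real.norm_eq_abs, abs_sub_comm, ← hans]; exact hE i
    have h := dotProduct_le_sum_abs_mul_norm w (v - M *ᵥ E)
    rw [hw, one_mul, dotProduct_sub] at h
    rw [hΨ]; linarith

/-- Separating-hyperplane step: if no distribution in the convex set `C` answers all `k`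
statistical queries within `±τ` of the targets `v`, then there is a combined query
`Ψ = Σᵢ wᵢ φⁱ` with `‖w‖₁ = 1` and a threshold `T` such that `Ψ(D̂) ≤ T` for all `D̂ ∈ C`,
while every distribution `E` answering all queries within `±τ/2` has `Ψ(E) ≥ T + τ/2`. -/
theorem stmt11 {X : Type*} [Fintype X] (k : ℕ) (hk : 0 < k)
    (φ : Fin k → X → ℝ) (hφ : ∀ i x, φ i x ∈ Set.Icc (-1:ℝ) 1)
    (v : Fin k → ℝ) (τ : ℝ) (hτ : 0 < τ)
    (C : Set (X → ℝ)) (hCconv : Convex ℝ C) (hCpmf : ∀ D ∈ C, IsPMF D)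
    (hsep : ¬ ∃ Dh ∈ C, ∀ i, |(∑ x, Dh x * φ i x) - v i| ≤ τ) :
    ∃ (w : Fin k → ℝ) (T : ℝ), (∑ i, |w i|) = 1 ∧
      (∀ Dh ∈ C, ∑ x, Dh x * (∑ i, w i * φ i x) ≤ T) ∧
      (∀ E : X → ℝ, IsPMF E → (∀ i, |(∑ x, E x * φ i x) - v i| ≤ τ / 2) →
        T + τ / 2 ≤ ∑ x, E x * (∑ i, w i * φ i x)) :=
  stmt11_general k hk φ v τ hτ C hCconv hsep
end

section
/- Let D be a distribution on finite X, Ψ : X → [−1,1] a query, η ≥ 0, and T ∈ [−1,1]. Assume the corruption cost ρ is closed under mixtures and ℓ-local, and that Ψ(D̂) ≤ T for every distribution D̂ with ρ(D, D̂) ≤ η. Then for any τ > 0 and n ∈ ℕ, the probability over S ~ D^n that there exists Ŝ with ρ(U(S), U(Ŝ)) ≤ η and Ψ(U(Ŝ)) ≥ T + τ/2 is at most exp(−τ²n/(8ℓ²)). -/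
open Finset
open scoped Classical

/-!
Let `f(S)` be the largest value `Ψ(D̂)` over corruptions `D̂` of the empirical distribution `U(S)`
with `ρ(U(S), D̂) ≤ η`; an adaptive corruption `Ŝ` of `S` with `Ψ(U(Ŝ)) ≥ T + τ/2` forces
`f(S) ≥ T + τ/2`. Changing one sample moves `U(S)` by `1/n` in total variation, so by locality
`f` has bounded differences `2ℓ/n`. Averaging near-optimal corruptions of the `U(S)` over
`S ~ Dⁿ` gives, by closure under mixtures, a corruption of `D = E[U(S)]`, whence `E[f(S)] ≤ T`.
McDiarmid's inequality, proved through Hoeffding's lemma by peeling off one coordinate at a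
time, then bounds the tail.
-/

section

variable {X : Type*} [Fintype X]

theorem IsPMF.nonempty {D : X → ℝ} (hD : IsPMF D) : Nonempty X := by
  by_contra h
  simpa [not_nonempty_iff.mp h] using hD.2

theorem IsPMF.sum_mul_le {D : X → ℝ} (hD : IsPMF D) {Ψ : X → ℝ} {B : ℝ} (hΨ : ∀ x, Ψ x ≤ B) :
    ∑ x, D x * Ψ x ≤ B :=
  calc ∑ x, D x * Ψ x ≤ ∑ x, D x * B :=
        sum_le_sum fun x _ => mul_le_mul_of_nonneg_left (hΨ x) (hD.1 x)
    _ = B := by rw [← sum_mul, hD.2, one_mul]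

theorem sum_mul_sub_sum_mul_le {Ψ : X → ℝ} (hΨ : ∀ x, |Ψ x| ≤ 1) (D E : X → ℝ) :
    ∑ x, D x * Ψ x - ∑ x, E x * Ψ x ≤ 2 * tvDist D E := by
  rw [tvDist, mul_div_cancel₀ _ two_ne_zero, ← sum_sub_distrib]
  refine sum_le_sum fun x _ => ?_
  rw [← sub_mul]
  exact (le_abs_self _).trans (by rw [abs_mul]; exact mul_le_of_le_one_right (abs_nonneg _) (hΨ x))

theorem convex_setOf_isPMF : Convex ℝ {D : X → ℝ | IsPMF D} := by
  intro D hD E hE a b ha hb hab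
  refine ⟨fun x => ?_, ?_⟩
  · have := hD.1 x; have := hE.1 x
    simp only [Pi.add_apply, Pi.smul_apply, smul_eq_mul]; positivity
  · simp [sum_add_distrib, ← mul_sum, hD.2, hE.2, hab]

open MeasureTheory ProbabilityTheory in
theorem IsPMF.sum_mul_exp_le {ι : Type*} [Fintype ι] {w : ι → ℝ} (hw : IsPMF w) {Z : ι → ℝ}
    {a b : ℝ} (hZ : ∀ i, Z i ∈ Set.Icc a b) (t : ℝ) :
    ∑ i, w i * Real.exp (t * Z i) ≤ Real.exp (t * ∑ i, w i * Z i + t ^ 2 * (b - a) ^ 2 / 8) := by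
  let _ : MeasurableSpace ι := ⊤
  let p : PMF ι := PMF.ofFintype (fun i => ENNReal.ofReal (w i)) (by
    rw [← ENNReal.ofReal_sum_of_nonneg fun i _ => hw.1 i, hw.2, ENNReal.ofReal_one])
  have hint (g : ι → ℝ) : ∫ i, g i ∂p.toMeasure = ∑ i, w i * g i := by
    simp [p, PMF.integral_eq_sum, ENNReal.toReal_ofReal (hw.1 _)]
  have hoeffding := (hasSubgaussianMGF_of_mem_Icc (μ := p.toMeasure) (X := Z)
    Measurable.of_discrete.aemeasurable (ae_of_all _ hZ)).mgf_le t
  rw [mgf, hint, hint] at hoeffding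
  set mean := ∑ i, w i * Z i
  calc ∑ i, w i * Real.exp (t * Z i)
      = Real.exp (t * mean) * ∑ i, w i * Real.exp (t * (Z i - mean)) := by
        rw [mul_sum]; congr! 1 with i; rw [mul_sub, Real.exp_sub]; field_simp
    _ ≤ Real.exp (t * mean) * Real.exp (t ^ 2 * (b - a) ^ 2 / 8) := by
        refine mul_le_mul_of_nonneg_left (hoeffding.trans_eq (congrArg Real.exp ?_))
          (Real.exp_pos _).le
        simp only [NNReal.coe_pow, NNReal.coe_div, coe_nnnorm, Real.norm_eq_abs, div_pow, sq_abs]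
        norm_num
        ring
    _ = _ := by rw [← Real.exp_add]

theorem sum_fin_succ_pi (n : ℕ) (F : (Fin (n + 1) → X) → ℝ) :
    ∑ S, F S = ∑ x, ∑ s : Fin n → X, F (Fin.cons x s) := by
  rw [← Fintype.sum_prod_type (f := fun p : X × (Fin n → X) => F (Fin.cons p.1 p.2))]
  exact (Fintype.sum_equiv (Fin.consEquiv fun _ => X) _ _ fun _ => rfl).symm

theorem sum_pi_prod_mul_fin_succ (D : X → ℝ) {n : ℕ} (f : (Fin (n + 1) → X) → ℝ) :
    ∑ S, (∏ i, D (S i)) * f S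
      = ∑ s : Fin n → X, (∏ i, D (s i)) * ∑ x, D x * f (Fin.cons x s) := by
  rw [sum_fin_succ_pi, sum_comm]
  refine sum_congr rfl fun s _ => ?_
  rw [mul_sum]
  refine sum_congr rfl fun x _ => ?_
  rw [Fin.prod_univ_succ]
  simp only [Fin.cons_zero, Fin.cons_succ]
  ring

theorem IsPMF.pi {D : X → ℝ} (hD : IsPMF D) (n : ℕ) : IsPMF fun S : Fin n → X => ∏ i, D (S i) :=
  ⟨fun S => prod_nonneg fun i _ => hD.1 (S i), by
    rw [← Fintype.prod_sum (fun _ => D)]; simp [hD.2]⟩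

theorem IsPMF.sum_pi_mul_apply {D : X → ℝ} (hD : IsPMF D) {n : ℕ} (i : Fin n) (g : X → ℝ) :
    ∑ S : Fin n → X, (∏ j, D (S j)) * g (S i) = ∑ x, D x * g x := by
  have hfactor (S : Fin n → X) :
      (∏ j, D (S j)) * g (S i) = ∏ j, D (S j) * if j = i then g (S j) else 1 := by
    rw [prod_mul_distrib, prod_ite_eq' univ i, if_pos (mem_univ i)]
  simp_rw [hfactor, ← Fintype.prod_sum fun j x => D x * if j = i then g x else 1]
  simp [mul_ite, hD.2]

def HasBoundedDifferences {n : ℕ} (f : (Fin n → X) → ℝ) (c : ℝ) : Prop :=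
  ∀ i S S', (∀ j ≠ i, S j = S' j) → f S - f S' ≤ c

theorem IsPMF.sum_pi_mul_exp_le {D : X → ℝ} (hD : IsPMF D) {c : ℝ} (t : ℝ) {n : ℕ}
    {f : (Fin n → X) → ℝ} (hf : HasBoundedDifferences f c) :
    ∑ S, (∏ i, D (S i)) * Real.exp (t * f S)
      ≤ Real.exp (t * ∑ S, (∏ i, D (S i)) * f S + n * (t ^ 2 * c ^ 2 / 8)) := by
  induction n with
  | zero => simp
  | succ n ih =>
    let g : (Fin n → X) → ℝ := fun s => ∑ x, D x * f (Fin.cons x s)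
    have hg : HasBoundedDifferences g c := by
      intro i s s' hss'
      have hcons (x : X) : f (Fin.cons x s) - f (Fin.cons x s') ≤ c :=
        hf i.succ _ _ fun j hj => by
          cases j using Fin.cases with
          | zero => rfl
          | succ k => simpa using hss' k (by rintro rfl; exact hj rfl)
      calc g s - g s' = ∑ x, D x * (f (Fin.cons x s) - f (Fin.cons x s')) := by
            simp only [g, mul_sub, sum_sub_distrib]
        _ ≤ c := hD.sum_mul_le hcons
    have hstep (s : Fin n → X) :
        ∑ x, D x * Real.exp (t * f (Fin.cons x s)) ≤ Real.exp (t * g s + t ^ 2 * c ^ 2 / 8) := by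
      have := hD.nonempty
      obtain ⟨x₀, -, hx₀⟩ := exists_min_image univ (fun x => f (Fin.cons x s)) univ_nonempty
      have hrange (x : X) :
          f (Fin.cons x s) ∈ Set.Icc (f (Fin.cons x₀ s)) (f (Fin.cons x₀ s) + c) :=
        ⟨hx₀ x (mem_univ x), by
          linarith [hf 0 (Fin.cons x s) (Fin.cons x₀ s) fun j hj => by
            cases j using Fin.cases with
            | zero => exact absurd rfl hj
            | succ k => rfl]⟩
      simpa using hD.sum_mul_exp_le hrange t
    calc ∑ S, (∏ i, D (S i)) * Real.exp (t * f S)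
        = ∑ s : Fin n → X, (∏ i, D (s i)) * ∑ x, D x * Real.exp (t * f (Fin.cons x s)) :=
          sum_pi_prod_mul_fin_succ D _
      _ ≤ ∑ s : Fin n → X, (∏ i, D (s i)) * Real.exp (t * g s + t ^ 2 * c ^ 2 / 8) :=
          sum_le_sum fun s _ => mul_le_mul_of_nonneg_left (hstep s) ((hD.pi n).1 s)
      _ = Real.exp (t ^ 2 * c ^ 2 / 8) * ∑ s : Fin n → X, (∏ i, D (s i)) * Real.exp (t * g s) := by
          simp only [Real.exp_add, mul_sum]; congr! 1 with s; ring
      _ ≤ Real.exp (t ^ 2 * c ^ 2 / 8) *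
            Real.exp (t * ∑ s : Fin n → X, (∏ i, D (s i)) * g s + n * (t ^ 2 * c ^ 2 / 8)) :=
          mul_le_mul_of_nonneg_left (ih hg) (Real.exp_pos _).le
      _ = Real.exp (t * ∑ S, (∏ i, D (S i)) * f S + ↑(n + 1) * (t ^ 2 * c ^ 2 / 8)) := by
          rw [sum_pi_prod_mul_fin_succ D f, ← Real.exp_add]
          congr 1
          push_cast
          ring

theorem IsPMF.mcdiarmid {D : X → ℝ} (hD : IsPMF D) {n : ℕ} (hn : 0 < n) {f : (Fin n → X) → ℝ}
    {c ε : ℝ} (hf : HasBoundedDifferences f c) (hc : 0 < c) (hε : 0 ≤ ε) :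
    ∑ S, (if (∑ S', (∏ i, D (S' i)) * f S') + ε ≤ f S then ∏ i, D (S i) else 0)
      ≤ Real.exp (-2 * ε ^ 2 / (n * c ^ 2)) := by
  set mean := ∑ S', (∏ i, D (S' i)) * f S'
  -- the minimiser of the Chernoff exponent `-t ε + n t² c² / 8`
  set t := 4 * ε / (n * c ^ 2)
  have ht : 0 ≤ t := by positivity
  calc ∑ S, (if mean + ε ≤ f S then ∏ i, D (S i) else 0)
      ≤ ∑ S, (∏ i, D (S i)) * Real.exp (t * (f S - mean - ε)) := by
        refine sum_le_sum fun S _ => ?_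
        split_ifs with h
        · exact le_mul_of_one_le_right ((hD.pi n).1 S)
            (Real.one_le_exp (mul_nonneg ht (by linarith)))
        · exact mul_nonneg ((hD.pi n).1 S) (Real.exp_pos _).le
    _ = Real.exp (-(t * (mean + ε))) * ∑ S, (∏ i, D (S i)) * Real.exp (t * f S) := by
        rw [mul_sum]; congr! 1 with S
        rw [show t * (f S - mean - ε) = -(t * (mean + ε)) + t * f S by ring, Real.exp_add]; ring
    _ ≤ Real.exp (-(t * (mean + ε))) * Real.exp (t * mean + n * (t ^ 2 * c ^ 2 / 8)) :=
        mul_le_mul_of_nonneg_left (hD.sum_pi_mul_exp_le t hf) (Real.exp_pos _).le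
    _ = Real.exp (-2 * ε ^ 2 / (n * c ^ 2)) := by
        rw [← Real.exp_add]
        congr 1
        simp only [t]
        field_simp
        ring

section Empirical

variable [DecidableEq X] {n : ℕ}

theorem emp_apply (S : Fin n → X) (x : X) :
    emp S x = (∑ j, if S j = x then 1 else 0) / n := by
  simp only [emp, card_filter, Nat.cast_sum, Nat.cast_ite, Nat.cast_one, Nat.cast_zero]

theorem sum_emp_mul (S : Fin n → X) (g : X → ℝ) : ∑ x, emp S x * g x = (∑ j, g (S j)) / n := by
  simp_rw [emp_apply, div_mul_eq_mul_div, ← sum_div, sum_mul, ite_mul, one_mul, zero_mul]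
  rw [sum_comm]
  simp

theorem isPMF_emp (hn : 0 < n) (S : Fin n → X) : IsPMF (emp S) :=
  ⟨fun x => by rw [emp]; positivity, by
    simpa [hn.ne'] using sum_emp_mul S fun _ => 1⟩

theorem tvDist_emp_le {S S' : Fin n → X} (i : Fin n) (h : ∀ j ≠ i, S j = S' j) :
    tvDist (emp S) (emp S') ≤ 1 / n := by
  have hdiff (x : X) : emp S x - emp S' x
      = ((if S i = x then 1 else 0) - (if S' i = x then 1 else 0)) / n := by
    rw [emp_apply, emp_apply, ← sub_div, ← sum_sub_distrib,
      sum_eq_single i (fun j _ hj => by rw [h j hj, sub_self]) (by simp)]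
  have hsum : ∑ x, |emp S x - emp S' x| ≤ 2 / n := by
    calc ∑ x, |emp S x - emp S' x|
        ≤ ∑ x, ((if S i = x then 1 else 0) + (if S' i = x then 1 else 0)) / (n : ℝ) := by
          refine sum_le_sum fun x _ => ?_
          rw [hdiff, abs_div, Nat.abs_cast]
          gcongr
          split_ifs <;> norm_num
      _ = 2 / n := by rw [← sum_div, sum_add_distrib]; simp; norm_num
  rw [tvDist]
  linarith [show (2 : ℝ) / n / 2 = 1 / n by ring]

theorem IsPMF.sum_pi_smul_emp {D : X → ℝ} (hD : IsPMF D) (hn : 0 < n) :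
    ∑ S : Fin n → X, (∏ i, D (S i)) • emp S = D := by
  funext x
  simp_rw [Finset.sum_apply, Pi.smul_apply, smul_eq_mul, emp_apply, mul_div_assoc', ← sum_div,
    mul_sum]
  rw [sum_comm]
  simp_rw [fun i => hD.sum_pi_mul_apply i fun y => if y = x then (1 : ℝ) else 0]
  simp [hn.ne']

end Empirical

section Corruption

variable (ρ : (X → ℝ) → (X → ℝ) → ENNReal) (η : ENNReal)

def corruptionPairs : Set ((X → ℝ) × (X → ℝ)) := {p | IsPMF p.1 ∧ IsPMF p.2 ∧ ρ p.1 p.2 ≤ η}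

def corruptedValues (Ψ : X → ℝ) (E : X → ℝ) : Set ℝ :=
  {r | ∃ Eh, IsPMF Eh ∧ ρ E Eh ≤ η ∧ ∑ x, Eh x * Ψ x = r}

def IsMixtureClosed : Prop :=
  ∀ θ : ℝ, θ ∈ Set.Ioo (0:ℝ) 1 → ∀ D₁ D₂ Dh₁ Dh₂ : X → ℝ,
    IsPMF D₁ → IsPMF D₂ → IsPMF Dh₁ → IsPMF Dh₂ →
    ρ (fun x => θ * D₁ x + (1 - θ) * D₂ x) (fun x => θ * Dh₁ x + (1 - θ) * Dh₂ x)
      ≤ max (ρ D₁ Dh₁) (ρ D₂ Dh₂)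

def IsLocal (ℓ : ℝ) : Prop :=
  ∀ D E Dh : X → ℝ, IsPMF D → IsPMF E → IsPMF Dh →
    ∃ Eh : X → ℝ, IsPMF Eh ∧ ρ E Eh ≤ ρ D Dh ∧ tvDist Dh Eh ≤ ℓ * tvDist D E

variable {ρ η}

theorem convex_corruptionPairs (hmix : IsMixtureClosed ρ) :
    Convex ℝ (corruptionPairs ρ η) := by
  rintro p ⟨hp₁, hp₂, hp⟩ q ⟨hq₁, hq₂, hq⟩ a b ha hb hab
  refine ⟨convex_setOf_isPMF hp₁ hq₁ ha hb hab, convex_setOf_isPMF hp₂ hq₂ ha hb hab, ?_⟩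
  rcases ha.eq_or_lt with rfl | ha
  · obtain rfl : b = 1 := by linarith
    simpa using hq
  rcases hb.eq_or_lt with rfl | hb
  · obtain rfl : a = 1 := by linarith
    simpa using hp
  obtain rfl : b = 1 - a := by linarith
  exact (hmix a ⟨ha, by linarith⟩ _ _ _ _ hp₁ hq₁ hp₂ hq₂).trans (max_le hp hq)

theorem bddAbove_corruptedValues (Ψ E : X → ℝ) : BddAbove (corruptedValues ρ η Ψ E) := by
  obtain ⟨B, hB⟩ := (Set.finite_range Ψ).bddAbove
  exact ⟨B, by rintro _ ⟨Eh, hEh, -, rfl⟩; exact hEh.sum_mul_le fun x => hB ⟨x, rfl⟩⟩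

variable {ℓ : ℝ} {Ψ : X → ℝ}

theorem exists_mem_corruptedValues_le_add (hlocal : IsLocal ρ ℓ)
    (hΨ : ∀ x, |Ψ x| ≤ 1) {E E' : X → ℝ} (hE : IsPMF E) (hE' : IsPMF E') {r : ℝ}
    (hr : r ∈ corruptedValues ρ η Ψ E) :
    ∃ r' ∈ corruptedValues ρ η Ψ E', r ≤ r' + 2 * ℓ * tvDist E E' := by
  obtain ⟨Eh, hEh, hρ, rfl⟩ := hr
  obtain ⟨Eh', hEh', hρ', htv⟩ := hlocal E E' Eh hE hE' hEh
  exact ⟨_, ⟨Eh', hEh', hρ'.trans hρ, rfl⟩, by linarith [sum_mul_sub_sum_mul_le hΨ Eh Eh']⟩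

theorem sSup_corruptedValues_sub_le (hlocal : IsLocal ρ ℓ)
    (hΨ : ∀ x, |Ψ x| ≤ 1) {E E' : X → ℝ} (hE : IsPMF E) (hE' : IsPMF E')
    (hne : (corruptedValues ρ η Ψ E).Nonempty) :
    sSup (corruptedValues ρ η Ψ E) - sSup (corruptedValues ρ η Ψ E') ≤ 2 * ℓ * tvDist E E' := by
  suffices sSup (corruptedValues ρ η Ψ E) ≤ sSup (corruptedValues ρ η Ψ E') + 2 * ℓ * tvDist E E' by
    linarith
  refine csSup_le hne fun r hr => ?_
  obtain ⟨r', hr', hrr'⟩ := exists_mem_corruptedValues_le_add hlocal hΨ hE hE' hr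
  linarith [le_csSup (bddAbove_corruptedValues Ψ E') hr']

theorem sum_mul_sSup_corruptedValues_le (hconv : Convex ℝ (corruptionPairs ρ η))
    {ι : Type*} [Fintype ι] {w : ι → ℝ} (hw : IsPMF w) {A : ι → X → ℝ} (hA : ∀ i, IsPMF (A i))
    (hne : ∀ i, (corruptedValues ρ η Ψ (A i)).Nonempty) {T : ℝ}
    (hT : ∀ Dh, IsPMF Dh → ρ (∑ i, w i • A i) Dh ≤ η → ∑ x, Dh x * Ψ x ≤ T) :
    ∑ i, w i * sSup (corruptedValues ρ η Ψ (A i)) ≤ T := by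
  refine le_of_forall_pos_le_add fun ε hε => ?_
  have hnear (i : ι) : ∃ Dh, IsPMF Dh ∧ ρ (A i) Dh ≤ η ∧
      sSup (corruptedValues ρ η Ψ (A i)) - ε < ∑ x, Dh x * Ψ x := by
    obtain ⟨_, ⟨Dh, hDh, hρ, rfl⟩, hlt⟩ := exists_lt_of_lt_csSup (hne i) (sub_lt_self _ hε)
    exact ⟨Dh, hDh, hρ, hlt⟩
  choose Dh hDh hρ hlt using hnear
  have hmix : (∑ i, w i • A i, ∑ i, w i • Dh i) ∈ corruptionPairs ρ η := by
    convert hconv.sum_mem (t := univ) (z := fun i => (A i, Dh i)) (fun i _ => hw.1 i) hw.2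
      fun i _ => ⟨hA i, hDh i, hρ i⟩ using 1
    ext1 <;> simp [Prod.fst_sum, Prod.snd_sum]
  calc ∑ i, w i * sSup (corruptedValues ρ η Ψ (A i))
      ≤ ∑ i, w i * (∑ x, Dh i x * Ψ x + ε) :=
        sum_le_sum fun i _ => mul_le_mul_of_nonneg_left (by linarith [hlt i]) (hw.1 i)
    _ = ∑ x, (∑ i, w i • Dh i) x * Ψ x + ε := by
        simp only [mul_add, sum_add_distrib, ← sum_mul, hw.2, one_mul]
        congr 1
        simp only [Finset.sum_apply, Pi.smul_apply, smul_eq_mul, mul_sum, sum_mul, mul_assoc]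
        exact sum_comm
    _ ≤ T + ε := by gcongr; exact hT _ hmix.2.1 hmix.2.2

section

variable [DecidableEq X]

theorem sum_div_mem_corruptedValues {E : X → ℝ} {m : ℕ} (hm : 0 < m) {Sh : Fin m → X}
    (hρ : ρ E (emp Sh) ≤ η) : (∑ j, Ψ (Sh j)) / m ∈ corruptedValues ρ η Ψ E :=
  ⟨emp Sh, isPMF_emp hm Sh, hρ, sum_emp_mul Sh Ψ⟩

theorem hasBoundedDifferences_sSup_corruptedValues (hlocal : IsLocal ρ ℓ) (hℓ : 0 ≤ ℓ)
    (hΨ : ∀ x, |Ψ x| ≤ 1) {n : ℕ} (hn : 0 < n)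
    (hne : ∀ S : Fin n → X, (corruptedValues ρ η Ψ (emp S)).Nonempty) :
    HasBoundedDifferences (fun S : Fin n → X => sSup (corruptedValues ρ η Ψ (emp S))) (2 * ℓ / n) :=
  fun i S S' h =>
    (sSup_corruptedValues_sub_le hlocal hΨ (isPMF_emp hn S) (isPMF_emp hn S') (hne S)).trans
      (by simpa only [mul_one_div] using
        mul_le_mul_of_nonneg_left (tvDist_emp_le i h) (by positivity : (0 : ℝ) ≤ 2 * ℓ))

end

end Corruption

end

theorem stmt13_general {X : Type*} [Fintype X] [DecidableEq X]
    (ρ : (X → ℝ) → (X → ℝ) → ENNReal) (ℓ : ℝ) (hℓ : 0 < ℓ)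
    (hmix : ∀ θ : ℝ, θ ∈ Set.Ioo (0:ℝ) 1 → ∀ D₁ D₂ Dh₁ Dh₂ : X → ℝ,
      IsPMF D₁ → IsPMF D₂ → IsPMF Dh₁ → IsPMF Dh₂ →
      ρ (fun x => θ * D₁ x + (1 - θ) * D₂ x) (fun x => θ * Dh₁ x + (1 - θ) * Dh₂ x)
        ≤ max (ρ D₁ Dh₁) (ρ D₂ Dh₂))
    (hlocal : ∀ D E Dh : X → ℝ, IsPMF D → IsPMF E → IsPMF Dh →
      ∃ Eh : X → ℝ, IsPMF Eh ∧ ρ E Eh ≤ ρ D Dh ∧ tvDist Dh Eh ≤ ℓ * tvDist D E)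
    (D : X → ℝ) (hD : IsPMF D) (η : ENNReal)
    (Ψ : X → ℝ) (hΨ : ∀ x, Ψ x ∈ Set.Icc (-1:ℝ) 1)
    (T : ℝ)
    (hbound : ∀ Dh : X → ℝ, IsPMF Dh → ρ D Dh ≤ η → ∑ x, Dh x * Ψ x ≤ T)
    (τ : ℝ) (hτ : 0 < τ) (n : ℕ) (hn : 0 < n) :
    ∑ S : Fin n → X,
        (if ∃ m' : ℕ, 0 < m' ∧ ∃ Sh : Fin m' → X,
            ρ (emp S) (emp Sh) ≤ η ∧ T + τ / 2 ≤ (∑ j, Ψ (Sh j)) / m'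
          then ∏ i, D (S i) else 0)
      ≤ Real.exp (-(τ ^ 2 * n) / (8 * ℓ ^ 2)) := by
  have hΨabs (x : X) : |Ψ x| ≤ 1 := abs_le.mpr (hΨ x)
  -- Without any admissible corruption the sum vanishes; with one, locality makes every
  -- `corruptedValues ρ η Ψ (emp S)` nonempty, so that its `sSup` is not the junk value `0`.
  by_cases hex : ∃ S₀ : Fin n → X, ∃ m' : ℕ, 0 < m' ∧ ∃ Sh : Fin m' → X,
      ρ (emp S₀) (emp Sh) ≤ η ∧ T + τ / 2 ≤ (∑ j, Ψ (Sh j)) / m'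
  swap
  · rw [sum_eq_zero fun S _ => if_neg fun h => hex ⟨S, h⟩]
    exact (Real.exp_pos _).le
  obtain ⟨S₀, m, hm, Sh, hρ₀, -⟩ := hex
  have hne (S : Fin n → X) : (corruptedValues ρ η Ψ (emp S)).Nonempty :=
    have ⟨r, hr, _⟩ := exists_mem_corruptedValues_le_add hlocal hΨabs (isPMF_emp hn S₀)
      (isPMF_emp hn S) (sum_div_mem_corruptedValues hm hρ₀)
    ⟨r, hr⟩
  set f : (Fin n → X) → ℝ := fun S => sSup (corruptedValues ρ η Ψ (emp S))
  have hf : HasBoundedDifferences f (2 * ℓ / n) :=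
    hasBoundedDifferences_sSup_corruptedValues hlocal hℓ.le hΨabs hn hne
  have hmean : ∑ S, (∏ i, D (S i)) * f S ≤ T :=
    sum_mul_sSup_corruptedValues_le (convex_corruptionPairs hmix) (hD.pi n) (isPMF_emp hn) hne
      (by rwa [hD.sum_pi_smul_emp hn])
  calc _ ≤ ∑ S, (if (∑ S', (∏ i, D (S' i)) * f S') + τ / 2 ≤ f S then ∏ i, D (S i) else 0) := by
        refine sum_le_sum fun S _ => ?_
        split_ifs with hevent hfar
        · rfl
        · obtain ⟨m', hm', Sh, hρ, hval⟩ := hevent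
          have hfS :=
            le_csSup (bddAbove_corruptedValues Ψ (emp S)) (sum_div_mem_corruptedValues hm' hρ)
          exact absurd (by linarith) hfar
        · exact (hD.pi n).1 S
        · rfl
    _ ≤ Real.exp (-2 * (τ / 2) ^ 2 / (n * (2 * ℓ / n) ^ 2)) :=
        hD.mcdiarmid hn hf (by positivity) (by positivity)
    _ = Real.exp (-(τ ^ 2 * n) / (8 * ℓ ^ 2)) := by
        congr 1
        field_simp
        ring

/-- Single-query concentration against adaptive adversaries: if `ρ` is closed under
mixtures and `ℓ`-local, and every oblivious `η`-corruption `D̂` of `D` has `Ψ(D̂) ≤ T`,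
then the probability over `S ~ Dⁿ` that some adaptive corruption `Ŝ` of `S` (with
`ρ(U(S), U(Ŝ)) ≤ η`) achieves `Ψ(U(Ŝ)) ≥ T + τ/2` is at most `exp(−τ²n/(8ℓ²))`. -/
theorem stmt13 {X : Type*} [Fintype X] [DecidableEq X]
    (ρ : (X → ℝ) → (X → ℝ) → ENNReal) (ℓ : ℝ) (hℓ : 0 < ℓ)
    (hmix : ∀ θ : ℝ, θ ∈ Set.Ioo (0:ℝ) 1 → ∀ D₁ D₂ Dh₁ Dh₂ : X → ℝ,
      IsPMF D₁ → IsPMF D₂ → IsPMF Dh₁ → IsPMF Dh₂ →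
      ρ (fun x => θ * D₁ x + (1 - θ) * D₂ x) (fun x => θ * Dh₁ x + (1 - θ) * Dh₂ x)
        ≤ max (ρ D₁ Dh₁) (ρ D₂ Dh₂))
    (hlocal : ∀ D E Dh : X → ℝ, IsPMF D → IsPMF E → IsPMF Dh →
      ∃ Eh : X → ℝ, IsPMF Eh ∧ ρ E Eh ≤ ρ D Dh ∧ tvDist Dh Eh ≤ ℓ * tvDist D E)
    (D : X → ℝ) (hD : IsPMF D) (η : ENNReal)
    (Ψ : X → ℝ) (hΨ : ∀ x, Ψ x ∈ Set.Icc (-1:ℝ) 1)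
    (T : ℝ) (hT : T ∈ Set.Icc (-1:ℝ) 1)
    (hbound : ∀ Dh : X → ℝ, IsPMF Dh → ρ D Dh ≤ η → ∑ x, Dh x * Ψ x ≤ T)
    (τ : ℝ) (hτ : 0 < τ) (n : ℕ) (hn : 0 < n) :
    ∑ S : Fin n → X,
        (if ∃ m' : ℕ, 0 < m' ∧ ∃ Sh : Fin m' → X,
            ρ (emp S) (emp Sh) ≤ η ∧ T + τ / 2 ≤ (∑ j, Ψ (Sh j)) / m'
          then ∏ i, D (S i) else 0)
      ≤ Real.exp (-(τ ^ 2 * n) / (8 * ℓ ^ 2)) :=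
  stmt13_general ρ ℓ hℓ hmix hlocal D hD η Ψ hΨ T hbound τ hτ n hn
end

section
/- Define, for η ∈ [0,1), cost_sub(D, D̂) := cost_add(D̂, D), i.e., the subtractive-noise cost. Then cost_sub with budget η is 1/(1−η)-local: for any distributions D, E, D̂ on a finite domain X with cost_sub(D, D̂) ≤ η, there exists Ê with cost_sub(E, Ê) ≤ cost_sub(D, D̂) and dist_TV(D̂, Ê) ≤ (1/(1−η))·dist_TV(D, E). -/
open Finset

/-- The subtractive-noise cost: `cost_sub(D, D̂) = cost_add(D̂, D)`. -/
noncomputable def costSub {X : Type*} [Fintype X] (D Dh : X → ℝ) : ENNReal :=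
  costAdd Dh D

/-!
The infimum `e = cost_sub(D, D̂) ≤ η` is attained, so `A := (1 - e) D̂ ≤ D`. Shrink `E` to a
measure `B ≤ E` of mass `1 - e` by removing a fixed fraction of its excess `(E - A)⁺` over `A`;
this keeps `(A - B)⁺ = (A - E)⁺`. Then `Ê := B / (1 - e)` has `cost_sub(E, Ê) ≤ e`, and
`(1 - e) dist_TV(D̂, Ê) = ∑ (A - B)⁺ = ∑ (A - E)⁺ ≤ ∑ (D - E)⁺ = dist_TV(D, E)`.
-/

section
variable {X : Type*} [Fintype X]

lemma tvDist_nonneg (P Q : X → ℝ) : 0 ≤ tvDist P Q :=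
  div_nonneg (sum_nonneg fun _ _ => abs_nonneg _) zero_le_two

lemma tvDist_mul_mul {c : ℝ} (hc : 0 ≤ c) (P Q : X → ℝ) :
    tvDist (fun x => c * P x) (fun x => c * Q x) = c * tvDist P Q := by
  simp only [tvDist, ← mul_sub, abs_mul, abs_of_nonneg hc, ← mul_sum, mul_div_assoc]

lemma tvDist_eq_sum_max_sub {P Q : X → ℝ} (h : ∑ x, P x = ∑ x, Q x) :
    tvDist P Q = ∑ x, max (P x - Q x) 0 := by
  have habs : ∀ t : ℝ, |t| = 2 * max t 0 - t := fun t => by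
    rcases le_total 0 t with ht | ht
    · rw [abs_of_nonneg ht, max_eq_left ht]; ring
    · rw [abs_of_nonpos ht, max_eq_right ht]; ring
  have hsub : ∑ x, (P x - Q x) = 0 := by rw [sum_sub_distrib, h, sub_self]
  simp only [tvDist, habs, sum_sub_distrib, ← mul_sum, hsub]
  ring

lemma IsPMF.eq_of_le {P Q : X → ℝ} (hP : IsPMF P) (hQ : IsPMF Q) (h : ∀ x, P x ≤ Q x) :
    P = Q :=
  funext fun x => (sum_eq_sum_iff_of_le fun x _ => h x).1 (hP.2.trans hQ.2.symm) x (mem_univ x)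

lemma costAdd_le_ofReal_s19 {P Q : X → ℝ} {e : ℝ} (hP : IsPMF P) (hQ : IsPMF Q) (he0 : 0 ≤ e)
    (he1 : e ≤ 1) (h : ∀ x, (1 - e) * P x ≤ Q x) : costAdd P Q ≤ ENNReal.ofReal e := by
  refine sInf_le ⟨e, rfl, he0, he1, ?_⟩
  rcases he0.eq_or_lt with rfl | hpos
  · refine ⟨Q, hQ, fun x => ?_⟩
    rw [hP.eq_of_le hQ (by simpa using h)]
    ring
  · refine ⟨fun x => (Q x - (1 - e) * P x) / e,
      ⟨fun x => div_nonneg (sub_nonneg.2 (h x)) hpos.le, ?_⟩, fun x => ?_⟩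
    · rw [← sum_div, sum_sub_distrib, ← mul_sum, hP.2, hQ.2]
      field_simp
      ring
    · field_simp
      ring

lemma exists_costAdd_eq_ofReal {P Q : X → ℝ} (hP : IsPMF P) (hQ : IsPMF Q) :
    ∃ e : ℝ, 0 ≤ e ∧ e ≤ 1 ∧ (∀ x, (1 - e) * P x ≤ Q x) ∧
      costAdd P Q = ENNReal.ofReal e := by
  set S : Set ℝ := {e | 0 ≤ e ∧ e ≤ 1 ∧ ∀ x, (1 - e) * P x ≤ Q x}
  have hS1 : (1 : ℝ) ∈ S := ⟨zero_le_one, le_rfl, fun x => by simpa using hQ.1 x⟩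
  have hSbdd : BddBelow S := ⟨0, fun e he => he.1⟩
  have hSclosed : IsClosed S := by
    simp only [S, Set.ofPred_and, Set.ofPred_forall]
    exact (isClosed_le continuous_const continuous_id).inter
      ((isClosed_le continuous_id continuous_const).inter
        (isClosed_iInter fun x => isClosed_le (by fun_prop) continuous_const))
  obtain ⟨he0, he1, hle⟩ : sInf S ∈ S := hSclosed.csInf_mem ⟨1, hS1⟩ hSbdd
  refine ⟨sInf S, he0, he1, hle, le_antisymm (costAdd_le_ofReal_s19 hP hQ he0 he1 hle) ?_⟩
  refine le_sInf ?_
  rintro _ ⟨e, rfl, he0, he1, F, hF, hQF⟩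
  have hle' : ∀ x, (1 - e) * P x ≤ Q x := fun x =>
    (hQF x).symm ▸ le_add_of_nonneg_right (mul_nonneg he0 (hF.1 x))
  exact ENNReal.ofReal_le_ofReal (csInf_le hSbdd ⟨he0, he1, hle'⟩)

lemma exists_le_sum_eq_max_sub_eq {A E : X → ℝ} (hA : ∀ x, 0 ≤ A x) (hE : ∀ x, 0 ≤ E x)
    (hsum : ∑ x, A x ≤ ∑ x, E x) :
    ∃ B : X → ℝ, (∀ x, 0 ≤ B x) ∧ (∀ x, B x ≤ E x) ∧ ∑ x, B x = ∑ x, A x ∧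
      ∀ x, max (A x - B x) 0 = max (A x - E x) 0 := by
  set M : X → ℝ := fun x => max (E x - A x) 0
  have hM0 : ∀ x, 0 ≤ M x := fun x => le_max_right _ _
  have hME : ∀ x, M x ≤ E x := fun x => max_le (by linarith [hA x]) (hE x)
  have hexcess : ∑ x, E x - ∑ x, A x ≤ ∑ x, M x := by
    rw [← sum_sub_distrib]
    exact sum_le_sum fun x _ => le_max_left _ _
  set c := (∑ x, E x - ∑ x, A x) / ∑ x, M x
  have hc0 : 0 ≤ c := div_nonneg (sub_nonneg.2 hsum) (sum_nonneg fun x _ => hM0 x)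
  have hc1 : c ≤ 1 := div_le_one_of_le₀ hexcess (sum_nonneg fun x _ => hM0 x)
  have hcM : c * ∑ x, M x = ∑ x, E x - ∑ x, A x :=
    div_mul_cancel_of_imp fun h => le_antisymm (h ▸ hexcess) (sub_nonneg.2 hsum)
  refine ⟨fun x => E x - c * M x, fun x => ?_, fun x => ?_, ?_, fun x => ?_⟩
  · linarith [mul_le_of_le_one_left (hM0 x) hc1, hME x]
  · exact sub_le_self _ (mul_nonneg hc0 (hM0 x))
  · rw [sum_sub_distrib, ← mul_sum, hcM]
    ring
  · show max (A x - (E x - c * M x)) 0 = _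
    rcases le_total (A x) (E x) with h | h
    · have hMx : M x = E x - A x := max_eq_left (sub_nonneg.2 h)
      rw [max_eq_right (sub_nonpos.2 h), max_eq_right]
      nlinarith
    · simp [M, max_eq_right (sub_nonpos.2 h)]

lemma exists_isPMF_mul_le_tvDist_le {D E Dh : X → ℝ} (hD : IsPMF D) (hE : IsPMF E)
    (hDh : IsPMF Dh) {e : ℝ} (he0 : 0 ≤ e) (he1 : e < 1) (hle : ∀ x, (1 - e) * Dh x ≤ D x) :
    ∃ Eh : X → ℝ, IsPMF Eh ∧ (∀ x, (1 - e) * Eh x ≤ E x) ∧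
      (1 - e) * tvDist Dh Eh ≤ tvDist D E := by
  have h1e : 0 < 1 - e := sub_pos.2 he1
  set A : X → ℝ := fun x => (1 - e) * Dh x
  have hAsum : ∑ x, A x = 1 - e := by rw [← mul_sum, hDh.2, mul_one]
  obtain ⟨B, hB0, hBE, hBsum, hBmax⟩ := exists_le_sum_eq_max_sub_eq
    (fun x => mul_nonneg h1e.le (hDh.1 x)) hE.1 (by rw [hAsum, hE.2]; linarith)
  have hAB : (fun x => (1 - e) * (B x / (1 - e))) = B := funext fun x => by field_simp
  refine ⟨fun x => B x / (1 - e), ⟨fun x => div_nonneg (hB0 x) h1e.le, ?_⟩,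
    fun x => (congrFun hAB x).trans_le (hBE x), ?_⟩
  · rw [← sum_div, hBsum, hAsum, div_self h1e.ne']
  calc (1 - e) * tvDist Dh (fun x => B x / (1 - e))
      = tvDist A B := by rw [← tvDist_mul_mul h1e.le, hAB]
    _ = ∑ x, max (A x - E x) 0 := by
      rw [tvDist_eq_sum_max_sub hBsum.symm]
      exact sum_congr rfl fun x _ => hBmax x
    _ ≤ ∑ x, max (D x - E x) 0 :=
      sum_le_sum fun x _ => max_le_max (sub_le_sub_right (hle x) _) le_rfl
    _ = tvDist D E := (tvDist_eq_sum_max_sub (hD.2.trans hE.2.symm)).symm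

end

/-- The subtractive-noise cost with budget `η ∈ [0,1)` is `1/(1−η)`-local: for any
distributions `D, E, D̂` with `cost_sub(D, D̂) ≤ η`, there exists `Ê` with
`cost_sub(E, Ê) ≤ cost_sub(D, D̂)` and `dist_TV(D̂, Ê) ≤ (1/(1−η))·dist_TV(D, E)`. -/
theorem stmt19 {X : Type*} [Fintype X] (η : ℝ) (hη0 : 0 ≤ η) (hη1 : η < 1)
    (D E Dh : X → ℝ) (hD : IsPMF D) (hE : IsPMF E) (hDh : IsPMF Dh)
    (hcost : costSub D Dh ≤ ENNReal.ofReal η) :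
    ∃ Eh : X → ℝ, IsPMF Eh ∧ costSub E Eh ≤ costSub D Dh ∧
      tvDist Dh Eh ≤ (1 / (1 - η)) * tvDist D E := by
  obtain ⟨e, he0, he1, hle, hcostD⟩ := exists_costAdd_eq_ofReal hDh hD
  have heη : e ≤ η := (ENNReal.ofReal_le_ofReal_iff hη0).1 (hcostD ▸ hcost)
  obtain ⟨Eh, hEh, hEhE, htv⟩ :=
    exists_isPMF_mul_le_tvDist_le hD hE hDh he0 (heη.trans_lt hη1) hle
  refine ⟨Eh, hEh, ?_, ?_⟩
  · rw [costSub, costSub, hcostD]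
    exact costAdd_le_ofReal_s19 hEh hE he0 he1 hEhE
  · rw [one_div_mul_eq_div, le_div_iff₀ (sub_pos.2 hη1)]
    calc tvDist Dh Eh * (1 - η) ≤ (1 - e) * tvDist Dh Eh := by
          nlinarith [tvDist_nonneg Dh Eh]
      _ ≤ tvDist D E := htv
end
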